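/- Let d ≥ 1, ε ∈ ℝ, and let S : ℝ^d → ℝ, A : ℝ^d → ℂ be smooth (C^∞). With the operators N₂(S,A) = ( 0 , (i(ε−1)/2)ΔA ) and N₄(S,A) = ( ε²ΔS , −iε A ΔS ), and their Gateaux derivatives DN₂(S,A)·(S₀,A₀) = ( 0 , (i(ε−1)/2)ΔA₀ ) and DN₄(S,A)·(S₀,A₀) = ( ε²ΔS₀ , −iε( A₀ΔS + AΔS₀ ) ), the commutator [N₂,N₄](S,A) := DN₂(S,A)·N₄(S,A) − DN₄(S,A)·N₂(S,A) equals, at every point, ( 0 , (ε(ε−1)/2) ( A Δ²S + 2 ∇A·∇ΔS ) ). -/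

import Mathlib

/-! Both amplitude terms of the commutator carry the factor `−iε · i(ε−1)/2 = ε(ε−1)/2`:
`DN₂·N₄` contributes it times `Δ(A·ΔS)`, and `DN₄·N₂` (whose `S₀`-slot is `0`) times `ΔA·ΔS`.
The Leibniz rule `Δ(fg) = Δf·g + 2∇f·∇g + f·Δg` makes the `ΔA·ΔS` terms cancel, leaving
`A·Δ²S + 2∇A·∇ΔS`. -/

noncomputable section

open Real Complex Finset

/-- Partial derivative in the `k`-th coordinate direction of a function on `ℝ^d`. -/
def pds {d : ℕ} {E : Type*} [NormedAddCommGroup E] [NormedSpace ℝ E]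
    (f : (Fin d → ℝ) → E) (k : Fin d) (x : Fin d → ℝ) : E :=
  fderiv ℝ f x (Pi.single k 1)

/-- Laplacian `Δ = ∑ₖ ∂²_{x_k}` of a function on `ℝ^d`. -/
def laps {d : ℕ} {E : Type*} [NormedAddCommGroup E] [NormedSpace ℝ E]
    (f : (Fin d → ℝ) → E) (x : Fin d → ℝ) : E :=
  ∑ k : Fin d, pds (pds f k) k x

/-- Second (amplitude) component of the operator `N₂(S,A) = (0, (i(ε−1)/2)ΔA)`;
its first component is `0`. -/
def opN2A {d : ℕ} (ε : ℝ) (A : (Fin d → ℝ) → ℂ) : (Fin d → ℝ) → ℂ :=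
  fun x => Complex.I * ((ε : ℂ) - 1) / 2 * laps A x

/-- Second component of the Gateaux derivative `DN₂(S,A)·(S₀,A₀) = (0, (i(ε−1)/2)ΔA₀)`;
its first component is `0`. -/
def opDN2A {d : ℕ} (ε : ℝ) (A₀ : (Fin d → ℝ) → ℂ) : (Fin d → ℝ) → ℂ :=
  fun x => Complex.I * ((ε : ℂ) - 1) / 2 * laps A₀ x

/-- First (phase) component of the operator `N₄(S,A) = (ε²ΔS, −iεAΔS)`. -/
def opN4S {d : ℕ} (ε : ℝ) (S : (Fin d → ℝ) → ℝ) : (Fin d → ℝ) → ℝ :=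
  fun x => ε ^ 2 * laps S x

/-- Second (amplitude) component of the operator `N₄`. -/
def opN4A {d : ℕ} (ε : ℝ) (S : (Fin d → ℝ) → ℝ) (A : (Fin d → ℝ) → ℂ) : (Fin d → ℝ) → ℂ :=
  fun x => -Complex.I * (ε : ℂ) * A x * ((laps S x : ℝ) : ℂ)

/-- First component of the Gateaux derivative `DN₄(S,A)·(S₀,A₀) = (ε²ΔS₀, −iε(A₀ΔS + AΔS₀))`. -/
def opDN4S {d : ℕ} (ε : ℝ) (S₀ : (Fin d → ℝ) → ℝ) : (Fin d → ℝ) → ℝ :=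
  fun x => ε ^ 2 * laps S₀ x

/-- Second component of the Gateaux derivative `DN₄(S,A)·(S₀,A₀)`. -/
def opDN4A {d : ℕ} (ε : ℝ) (S : (Fin d → ℝ) → ℝ) (A : (Fin d → ℝ) → ℂ)
    (S₀ : (Fin d → ℝ) → ℝ) (A₀ : (Fin d → ℝ) → ℂ) : (Fin d → ℝ) → ℂ :=
  fun x => -Complex.I * (ε : ℂ) *
    (A₀ x * ((laps S x : ℝ) : ℂ) + A x * ((laps S₀ x : ℝ) : ℂ))

section Laplacian

variable {d : ℕ} {E F : Type*} [NormedAddCommGroup E] [NormedSpace ℝ E]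
  [NormedAddCommGroup F] [NormedSpace ℝ F]

theorem ContDiff.pds {n : WithTop ℕ∞} {f : (Fin d → ℝ) → E} (hf : ContDiff ℝ (n + 1) f)
    (k : Fin d) : ContDiff ℝ n (pds f k) :=
  (hf.fderiv_right le_rfl).clm_apply contDiff_const

theorem ContDiff.laps {n : WithTop ℕ∞} {f : (Fin d → ℝ) → E} (hf : ContDiff ℝ (n + 2) f) :
    ContDiff ℝ n (laps f) := by
  have hf' : ContDiff ℝ (n + 1 + 1) f := by rwa [add_assoc, one_add_one_eq_two]
  exact ContDiff.sum fun k _ => (hf'.pds k).pds k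

theorem differentiable_pds {f : (Fin d → ℝ) → E} (hf : ContDiff ℝ 2 f) (k : Fin d) :
    Differentiable ℝ (pds f k) :=
  ((show ContDiff ℝ (1 + 1) f by rwa [one_add_one_eq_two]).pds k).differentiable one_ne_zero

theorem pds_const (c : E) (k : Fin d) : pds (fun _ => c) k = fun _ => 0 := by
  ext x
  simp [pds]

theorem laps_const (c : E) : laps (fun (_ : Fin d → ℝ) => c) = fun _ => 0 := by
  ext x
  simp [laps, pds_const]

theorem pds_clm_comp (L : E →L[ℝ] F) {f : (Fin d → ℝ) → E} (hf : Differentiable ℝ f)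
    (k : Fin d) : pds (fun x => L (f x)) k = fun x => L (pds f k x) := by
  ext x
  rw [pds, fderiv_fun_comp x L.differentiableAt (hf x), L.fderiv]
  rfl

theorem laps_clm_comp (L : E →L[ℝ] F) {f : (Fin d → ℝ) → E} (hf : ContDiff ℝ 2 f) :
    laps (fun x => L (f x)) = fun x => L (laps f x) := by
  ext x
  simp only [laps, map_sum]
  refine Finset.sum_congr rfl fun k _ => ?_
  rw [pds_clm_comp L (hf.differentiable two_ne_zero) k,
    pds_clm_comp L (differentiable_pds hf k) k]

theorem pds_add {f g : (Fin d → ℝ) → E} (hf : Differentiable ℝ f) (hg : Differentiable ℝ g)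
    (k : Fin d) : pds (fun x => f x + g x) k = fun x => pds f k x + pds g k x := by
  ext x
  simp [pds, fderiv_fun_add (hf x) (hg x)]

variable {𝔸 : Type*} [NormedCommRing 𝔸] [NormedAlgebra ℝ 𝔸]

theorem laps_const_mul (c : 𝔸) {f : (Fin d → ℝ) → 𝔸} (hf : ContDiff ℝ 2 f) :
    laps (fun x => c * f x) = fun x => c * laps f x :=
  laps_clm_comp (ContinuousLinearMap.mul ℝ 𝔸 c) hf

theorem pds_mul {f g : (Fin d → ℝ) → 𝔸} (hf : Differentiable ℝ f) (hg : Differentiable ℝ g)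
    (k : Fin d) : pds (fun x => f x * g x) k = fun x => pds f k x * g x + f x * pds g k x := by
  ext x
  simp [pds, fderiv_fun_mul (hf x) (hg x), add_comm, mul_comm]

theorem laps_mul {f g : (Fin d → ℝ) → 𝔸} (hf : ContDiff ℝ 2 f) (hg : ContDiff ℝ 2 g)
    (x : Fin d → ℝ) :
    laps (fun x => f x * g x) x
      = laps f x * g x + 2 * ∑ k : Fin d, pds f k x * pds g k x + f x * laps g x := by
  have hfd := hf.differentiable two_ne_zero
  have hgd := hg.differentiable two_ne_zero
  have hfkd := differentiable_pds hf
  have hgkd := differentiable_pds hg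
  have second_pds (k : Fin d) : pds (pds (fun x => f x * g x) k) k x
      = pds (pds f k) k x * g x + 2 * (pds f k x * pds g k x) + f x * pds (pds g k) k x := by
    rw [pds_mul hfd hgd, pds_add ((hfkd k).fun_mul hgd) (hfd.fun_mul (hgkd k)),
      pds_mul (hfkd k) hgd, pds_mul hfd (hgkd k)]
    ring
  simp only [laps, second_pds, Finset.sum_add_distrib, ← Finset.sum_mul, ← Finset.mul_sum]

end Laplacian

theorem commutator_N2_N4_general
    (d : ℕ) (ε : ℝ)
    (S : (Fin d → ℝ) → ℝ) (A : (Fin d → ℝ) → ℂ)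
    (hS : ContDiff ℝ (⊤ : ℕ∞) S) (hA : ContDiff ℝ (⊤ : ℕ∞) A) :
    ∀ x : Fin d → ℝ,
      (0 - opDN4S ε (fun _ => 0) x = 0)
      ∧ (opDN2A ε (opN4A ε S A) x - opDN4A ε S A (fun _ => 0) (opN2A ε A) x
          = (ε : ℂ) * ((ε : ℂ) - 1) / 2 *
              (A x * ((laps (laps S) x : ℝ) : ℂ)
                + 2 * ∑ k : Fin d, pds A k x * ((pds (laps S) k x : ℝ) : ℂ))) := by
  intro x
  have hS4 : ContDiff ℝ (2 + 2) S := hS.of_le (by norm_cast)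
  have hA2 : ContDiff ℝ 2 A := hA.of_le (by norm_cast)
  have hΔS : ContDiff ℝ 2 (laps S) := hS4.laps
  let G : (Fin d → ℝ) → ℂ := fun y => Complex.ofRealCLM (laps S y)
  have hG : ContDiff ℝ 2 G := Complex.ofRealCLM.contDiff.comp hΔS
  have hAG : ContDiff ℝ 2 (fun y => A y * G y) := hA2.mul hG
  have hN4A : opN4A ε S A = fun y => -Complex.I * ε * (A y * G y) := by
    ext y
    simp only [opN4A, G, Complex.ofRealCLM_apply]
    ring
  have hΔG : laps G x = laps (laps S) x := congrFun (laps_clm_comp Complex.ofRealCLM hΔS) x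
  have hgradG (k : Fin d) : pds G k x = pds (laps S) k x :=
    congrFun (pds_clm_comp Complex.ofRealCLM (hΔS.differentiable two_ne_zero) k) x
  refine ⟨by simp [opDN4S, laps_const], ?_⟩
  simp only [opDN2A, opDN4A, opN2A, laps_const, hN4A, laps_const_mul _ hAG,
    laps_mul hA2 hG, hΔG, hgradG]
  simp only [G, Complex.ofRealCLM_apply, Complex.ofReal_zero]
  linear_combination -(ε * (ε - 1) / 2 * (A x * ((laps (laps S) x : ℝ) : ℂ)
    + 2 * ∑ k : Fin d, pds A k x * ((pds (laps S) k x : ℝ) : ℂ))) * Complex.I_sq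

/-- For smooth `S : ℝ^d → ℝ` and `A : ℝ^d → ℂ`, the commutator
`[N₂,N₄](S,A) = DN₂(S,A)·N₄(S,A) − DN₄(S,A)·N₂(S,A)` equals, at every point,
`(0, (ε(ε−1)/2)(AΔ²S + 2∇A·∇ΔS))`. -/
theorem commutator_N2_N4
    (d : ℕ) (hd : 1 ≤ d) (ε : ℝ)
    (S : (Fin d → ℝ) → ℝ) (A : (Fin d → ℝ) → ℂ)
    (hS : ContDiff ℝ (⊤ : ℕ∞) S) (hA : ContDiff ℝ (⊤ : ℕ∞) A) :
    ∀ x : Fin d → ℝ,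
      (0 - opDN4S ε (fun _ => 0) x = 0)
      ∧ (opDN2A ε (opN4A ε S A) x - opDN4A ε S A (fun _ => 0) (opN2A ε A) x
          = (ε : ℂ) * ((ε : ℂ) - 1) / 2 *
              (A x * ((laps (laps S) x : ℝ) : ℂ)
                + 2 * ∑ k : Fin d, pds A k x * ((pds (laps S) k x : ℝ) : ℂ))) :=
  commutator_N2_N4_general d ε S A hS hA
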